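/- arXiv:2410.23088 — 2 statements merged into one kernel-verified Lean document; each statement's English description precedes it below -/
import Mathlib

section
/- Let G = ⟨S | R⟩ be a finitely presented group and for each g ∈ G let W_g be a nonempty set of words in S representing g. Suppose there is C > 0 such that: (i) for every g ∈ G some w ∈ W_g has |w| ≤ C·‖g‖_S; (ii) every null-homotopic word of the form w_1 w_2 w_3 with w_i ∈ W_{g_i} has area at most C·(|w_1|+|w_2|+|w_3|)^2. Then the Dehn function of G satisfies δ_G(N) ≼ N^2 (i.e. δ_G(N) ≤ C'·N^2 + C'·N + C' for some constant C'). -/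
/-!
For every word `p` fix a word `c p ∈ W (π p)⁻¹` with `|c p| ≤ C|p|`, so that the cycle `p · c p`
is null-homotopic. Cutting `p = p₁p₂` in half, this cycle is the product of `p₁ · c p₁`, a conjugate
of `p₂ · c p₂`, and the corner `(c p₁)⁻¹ (c p₂)⁻¹ c p`, which two triangles of perimeter at most
`2C|p|` fill with area `O(C³|p|²)`. The squared lengths of the halves sum to at most `5/9 |p|²`, so
these quadratic costs sum geometrically and `Area(p · c p) ≤ 24C³|p|² + m|p|`, where `m` bounds the
cycles of the finitely many one-letter words. Finally, for null-homotopic `w` the word `c w` lies in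
`W 1`, and the degenerate triangle `(c w, ε, ε)` fills it with area at most `C³|w|²`.
-/

/-- `L` is a list of conjugates of relators (or inverses of relators) from `R`
whose product is `g`: a witness that the null-homotopic element `g` has area at
most `L.length`. -/
def IsFilling {S : Type} (R : Finset (FreeGroup S))
    (L : List (FreeGroup S × FreeGroup S)) (g : FreeGroup S) : Prop :=
  (∀ p ∈ L, p.2 ∈ R ∨ p.2⁻¹ ∈ R) ∧ (L.map fun p => p.1 * p.2 * p.1⁻¹).prod = g

open FreeGroup

section Area

variable {S : Type} {R : Finset (FreeGroup S)}

def AreaLE (R : Finset (FreeGroup S)) (g : FreeGroup S) (a : ℝ) : Prop :=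
  ∃ L, IsFilling R L g ∧ (L.length : ℝ) ≤ a

theorem areaLE_one : AreaLE R 1 0 :=
  ⟨[], ⟨by simp, rfl⟩, by simp⟩

namespace AreaLE

variable {g h : FreeGroup S} {a b : ℝ}

theorem mono (hg : AreaLE R g a) (hab : a ≤ b) : AreaLE R g b :=
  let ⟨L, hL, hlen⟩ := hg
  ⟨L, hL, hlen.trans hab⟩

theorem mul (hg : AreaLE R g a) (hh : AreaLE R h b) : AreaLE R (g * h) (a + b) := by
  obtain ⟨L₁, ⟨hR₁, rfl⟩, hlen₁⟩ := hg
  obtain ⟨L₂, ⟨hR₂, rfl⟩, hlen₂⟩ := hh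
  refine ⟨L₁ ++ L₂, ⟨fun p hp => ?_, by simp⟩, by push_cast [List.length_append]; linarith⟩
  exact (List.mem_append.mp hp).elim (hR₁ p) (hR₂ p)

theorem conj (c : FreeGroup S) (hg : AreaLE R g a) : AreaLE R (c * g * c⁻¹) a := by
  obtain ⟨L, ⟨hR, rfl⟩, hlen⟩ := hg
  refine ⟨L.map fun p => (c * p.1, p.2), ⟨fun p hp => ?_, ?_⟩, by simpa using hlen⟩
  · obtain ⟨q, hq, rfl⟩ := List.mem_map.mp hp
    exact hR q hq
  rw [← MulAut.conj_apply, map_list_prod, List.map_map, List.map_map]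
  congr 1
  exact List.map_congr_left fun p _ => by simp [mul_assoc]

theorem inv (hg : AreaLE R g a) : AreaLE R g⁻¹ a := by
  obtain ⟨L, ⟨hR, rfl⟩, hlen⟩ := hg
  refine ⟨(L.map fun p => (p.1, p.2⁻¹)).reverse, ⟨fun p hp => ?_, ?_⟩, by simpa using hlen⟩
  · obtain ⟨q, hq, rfl⟩ := List.mem_map.mp (List.mem_reverse.mp hp)
    simpa [or_comm] using hR q hq
  · rw [List.prod_inv_reverse, List.map_reverse, List.map_map, List.map_map]
    congr 2
    exact List.map_congr_left fun p _ => by simp [mul_assoc]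

end AreaLE

theorem exists_areaLE_of_mem_normalClosure {g : FreeGroup S}
    (hg : g ∈ Subgroup.normalClosure (R : Set (FreeGroup S))) : ∃ n : ℕ, AreaLE R g n := by
  have hconj : ∀ x ∈ Group.conjugatesOfSet (R : Set (FreeGroup S)), AreaLE R x 1 := by
    intro x hx
    obtain ⟨r, hr, hrx⟩ := Group.mem_conjugatesOfSet_iff.mp hx
    obtain ⟨c, rfl⟩ := isConj_iff.mp hrx
    exact ⟨[(c, r)], ⟨by simp [Finset.mem_coe.mp hr], by simp⟩, by simp⟩
  induction hg using Subgroup.closure_induction'' with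
  | mem x hx => exact ⟨1, by simpa using hconj x hx⟩
  | inv_mem x hx => exact ⟨1, by simpa using (hconj x hx).inv⟩
  | one => exact ⟨0, by simpa using areaLE_one⟩
  | mul x y _ _ ihx ihy =>
    obtain ⟨n, hn⟩ := ihx
    obtain ⟨k, hk⟩ := ihy
    exact ⟨n + k, by simpa using hn.mul hk⟩

theorem exists_forall_areaLE_of_mem_normalClosure {ι : Type*} [Finite ι] {f : ι → FreeGroup S}
    (hf : ∀ i, f i ∈ Subgroup.normalClosure (R : Set (FreeGroup S))) :
    ∃ m : ℕ, ∀ i, AreaLE R (f i) m := by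
  choose n hn using fun i => exists_areaLE_of_mem_normalClosure (hf i)
  obtain ⟨m, hm⟩ := Finite.exists_le n
  exact ⟨m, fun i => (hn i).mono (by exact_mod_cast hm i)⟩

end Area

theorem List.forall_of_append_le_quadratic {α : Type*} {P : List α → ℝ → Prop}
    (mono : ∀ {p a b}, P p a → a ≤ b → P p b) {K m : ℝ} (hK : 0 ≤ K)
    (nil : P [] 0) (singleton : ∀ x, P [x] m)
    (append : ∀ {p q a b}, P p a → P q b →
      P (p ++ q) (a + b + K * ((p.length : ℝ) + q.length) ^ 2))
    (p : List α) : P p (3 * K * (p.length : ℝ) ^ 2 + m * p.length) := by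
  induction hN : p.length using Nat.strong_induction_on generalizing p with
  | _ N ih =>
  subst hN
  rcases p with _ | ⟨x, _ | ⟨y, t⟩⟩
  · simpa using nil
  · exact mono (singleton x) (by simp; linarith)
  · set p := x :: y :: t
    have hsplit := append (ih _ (by simp [p]; omega) (p.take (p.length / 2)) rfl)
      (ih _ (by simp [p]; omega) (p.drop (p.length / 2)) rfl)
    rw [List.take_append_drop] at hsplit
    refine mono hsplit ?_
    obtain ⟨a, b, ha, hb, hab, hba⟩ : ∃ a b : ℝ, (p.take (p.length / 2)).length = a ∧
        (p.drop (p.length / 2)).length = b ∧ a ≤ 2 * b ∧ b ≤ 2 * a := by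
      refine ⟨_, _, rfl, rfl, ?_, ?_⟩ <;> norm_cast <;> simp [p] <;> omega
    have hlen : (p.length : ℝ) = a + b := by
      rw [← ha, ← hb, ← Nat.cast_add, ← List.length_append, List.take_append_drop]
    rw [ha, hb, hlen]
    -- `a ≤ 2b` and `b ≤ 2a` give `a² + b² ≤ 5/9 (a + b)²`
    nlinarith [mul_nonneg hK (mul_nonneg (sub_nonneg.mpr hab) (sub_nonneg.mpr hba))]

section Triangles

variable {S : Type} {R : Finset (FreeGroup S)} {G : Type*} [Group G]
  {W : G → Set (List (S × Bool))} {C : ℝ}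

def HasQuadraticTriangles (R : Finset (FreeGroup S)) (W : G → Set (List (S × Bool))) (C : ℝ) :
    Prop :=
  ∀ g₁ g₂ g₃ w₁ w₂ w₃, w₁ ∈ W g₁ → w₂ ∈ W g₂ → w₃ ∈ W g₃ → g₁ * g₂ * g₃ = 1 →
    AreaLE R (mk w₁ * mk w₂ * mk w₃) (C * ((w₁.length : ℝ) + w₂.length + w₃.length) ^ 2)

namespace HasQuadraticTriangles

theorem areaLE_mul (hT : HasQuadraticTriangles R W C) (hnil : [] ∈ W 1)
    {g : G} {u v : List (S × Bool)} (hu : u ∈ W g) (hv : v ∈ W g⁻¹) :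
    AreaLE R (mk u * mk v) (C * ((u.length : ℝ) + v.length) ^ 2) := by
  simpa [← one_eq_mk] using hT _ _ _ u v [] hu hv hnil (by group)

theorem areaLE_of_mem_one (hT : HasQuadraticTriangles R W C) (hnil : [] ∈ W 1)
    {u : List (S × Bool)} (hu : u ∈ W 1) :
    AreaLE R (mk u) (C * (u.length : ℝ) ^ 2) := by
  have := hT.areaLE_mul hnil hu (inv_one (G := G) ▸ hnil)
  rwa [← one_eq_mk, mul_one, List.length_nil, Nat.cast_zero, add_zero] at this

/-- `W` need not be closed under inversion: the corner with two inverted sides is traded, through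
the bigon `v · u`, for the triangle `u₂ u₁ v`. -/
theorem areaLE_inv_mul_inv_mul (hT : HasQuadraticTriangles R W C) (hnil : [] ∈ W 1)
    {g₁ g₂ : G} {u₁ u₂ u v : List (S × Bool)} (hu₁ : u₁ ∈ W g₁)
    (hu₂ : u₂ ∈ W g₂) (hu : u ∈ W (g₂ * g₁)) (hv : v ∈ W (g₂ * g₁)⁻¹) :
    AreaLE R ((mk u₁)⁻¹ * (mk u₂)⁻¹ * mk u)
      (C * ((v.length : ℝ) + u.length) ^ 2 +
        C * ((u₂.length : ℝ) + u₁.length + v.length) ^ 2) := by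
  have hbigon := hT.areaLE_mul hnil hv (by rwa [inv_inv])
  have htri := hT _ _ _ u₂ u₁ v hu₂ hu₁ hv (by group)
  convert hbigon.mul (htri.inv.conj (mk u)⁻¹) using 1
  group

theorem areaLE_append (hT : HasQuadraticTriangles R W C) (hnil : [] ∈ W 1) (hC : 0 ≤ C)
    {π : FreeGroup S →* G} {c : List (S × Bool) → List (S × Bool)}
    (hcW : ∀ p, c p ∈ W (π (mk p))⁻¹) (hc : ∀ p, ((c p).length : ℝ) ≤ C * p.length)
    {p q : List (S × Bool)} {a b : ℝ} (hp : AreaLE R (mk p * mk (c p)) a)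
    (hq : AreaLE R (mk q * mk (c q)) b) :
    AreaLE R (mk (p ++ q) * mk (c (p ++ q)))
      (a + b + 8 * C ^ 3 * ((p.length : ℝ) + q.length) ^ 2) := by
  have hπ : (π (mk (p ++ q)))⁻¹ = (π (mk q))⁻¹ * (π (mk p))⁻¹ := by
    rw [← mul_mk, _root_.map_mul, mul_inv_rev]
  set v := c (invRev (p ++ q))
  have hv : v ∈ W ((π (mk q))⁻¹ * (π (mk p))⁻¹)⁻¹ := by
    rw [← hπ, inv_inv]
    simpa only [← inv_mk, _root_.map_inv, inv_inv] using hcW (invRev (p ++ q))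
  have hcorner := hT.areaLE_inv_mul_inv_mul hnil (hcW p) (hcW q) (hπ ▸ hcW (p ++ q)) hv
  have hsplit : mk (p ++ q) * mk (c (p ++ q)) = mk p * mk (c p) *
      ((mk (c p))⁻¹ * (mk q * mk (c q)) * (mk (c p))⁻¹⁻¹) *
      ((mk (c p))⁻¹ * (mk (c q))⁻¹ * mk (c (p ++ q))) := by
    rw [← mul_mk]; group
  rw [hsplit]
  refine ((hp.mul (hq.conj _)).mul hcorner).mono ?_
  set N : ℝ := (p.length : ℝ) + q.length
  have hlen : ((p ++ q).length : ℝ) = N := by simp [N]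
  have hv_len : (v.length : ℝ) ≤ C * N := by
    simpa only [invRev_length, hlen] using hc (invRev (p ++ q))
  have hu_len : ((c (p ++ q)).length : ℝ) ≤ C * N := hlen ▸ hc (p ++ q)
  have hbigon : (v.length : ℝ) + (c (p ++ q)).length ≤ 2 * C * N := by linarith
  have htri : ((c q).length : ℝ) + (c p).length + v.length ≤ 2 * C * N := by
    linarith [hc p, hc q]
  calc a + b + (C * ((v.length : ℝ) + (c (p ++ q)).length) ^ 2 +
        C * (((c q).length : ℝ) + (c p).length + v.length) ^ 2)
      ≤ a + b + (C * (2 * C * N) ^ 2 + C * (2 * C * N) ^ 2) := by gcongr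
    _ = a + b + 8 * C ^ 3 * N ^ 2 := by ring

theorem exists_areaLE_quadratic [Finite S] (hT : HasQuadraticTriangles R W C) (hC : 0 ≤ C)
    {π : FreeGroup S →* G} (hker : π.ker = Subgroup.normalClosure (R : Set (FreeGroup S)))
    (hWrep : ∀ g, ∀ w ∈ W g, π (mk w) = g)
    (hshort : ∀ p, ∃ w ∈ W (π (mk p)), (w.length : ℝ) ≤ C * p.length) :
    ∃ m : ℕ, ∀ w, mk w ∈ Subgroup.normalClosure (R : Set (FreeGroup S)) →
      AreaLE R (mk w) (25 * C ^ 3 * (w.length : ℝ) ^ 2 + m * w.length) := by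
  choose c hcW hc using fun p => hshort (invRev p)
  simp only [← inv_mk, _root_.map_inv, invRev_length] at hcW hc
  have hc_nil : c [] = [] := List.eq_nil_of_length_eq_zero <| by
    exact_mod_cast le_antisymm (by simpa using hc []) (Nat.cast_nonneg _)
  have hnil : [] ∈ W 1 := by simpa [hc_nil, ← one_eq_mk] using hcW []
  obtain ⟨m, hm⟩ := exists_forall_areaLE_of_mem_normalClosure (R := R)
    (f := fun x : S × Bool => mk [x] * mk (c [x])) fun x => by
      rw [← hker, MonoidHom.mem_ker, _root_.map_mul, hWrep _ _ (hcW [x]), mul_inv_cancel]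
  have hcycle := List.forall_of_append_le_quadratic
    (P := fun p a => AreaLE R (mk p * mk (c p)) a) (fun h hab => h.mono hab)
    (by positivity : (0 : ℝ) ≤ 8 * C ^ 3) (by simpa [hc_nil, ← one_eq_mk] using areaLE_one) hm
    (hT.areaLE_append hnil hC hcW hc)
  refine ⟨m, fun w hw => ?_⟩
  have hcw : c w ∈ W 1 := by
    have hπw : π (mk w) = 1 := by rwa [← MonoidHom.mem_ker, hker]
    simpa [hπw] using hcW w
  have hfill := (hcycle w).mul (hT.areaLE_of_mem_one hnil hcw).inv
  rw [mul_inv_cancel_right] at hfill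
  refine hfill.mono ?_
  calc 3 * (8 * C ^ 3) * (w.length : ℝ) ^ 2 + m * w.length + C * ((c w).length : ℝ) ^ 2
      ≤ 3 * (8 * C ^ 3) * (w.length : ℝ) ^ 2 + m * w.length + C * (C * w.length) ^ 2 := by
        gcongr; exact hc w
    _ = 25 * C ^ 3 * (w.length : ℝ) ^ 2 + m * w.length := by ring

end HasQuadraticTriangles

end Triangles

theorem dehn_quadratic_from_triangles_general (S : Type) [Fintype S] (R : Finset (FreeGroup S))
    (W : (FreeGroup S ⧸ Subgroup.normalClosure (R : Set (FreeGroup S))) → Set (List (S × Bool)))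
    (hWrep : ∀ g, ∀ w ∈ W g,
      QuotientGroup.mk' (Subgroup.normalClosure (R : Set (FreeGroup S))) (FreeGroup.mk w) = g)
    (C : ℝ) (hC : 0 < C)
    (h1 : ∀ g (L : List (S × Bool)),
      QuotientGroup.mk' (Subgroup.normalClosure (R : Set (FreeGroup S))) (FreeGroup.mk L) = g →
      ∃ w ∈ W g, (w.length : ℝ) ≤ C * L.length)
    (h2 : ∀ g₁ g₂ g₃ (w₁ w₂ w₃ : List (S × Bool)), w₁ ∈ W g₁ → w₂ ∈ W g₂ → w₃ ∈ W g₃ →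
      FreeGroup.mk (w₁ ++ w₂ ++ w₃) ∈ Subgroup.normalClosure (R : Set (FreeGroup S)) →
      ∃ L : List (FreeGroup S × FreeGroup S),
        IsFilling R L (FreeGroup.mk (w₁ ++ w₂ ++ w₃)) ∧
        (L.length : ℝ) ≤ C * ((w₁.length + w₂.length + w₃.length : ℕ) : ℝ) ^ 2) :
    ∃ C' : ℝ, 0 < C' ∧
      ∀ w : List (S × Bool),
        FreeGroup.mk w ∈ Subgroup.normalClosure (R : Set (FreeGroup S)) →
        ∃ L : List (FreeGroup S × FreeGroup S),
          IsFilling R L (FreeGroup.mk w) ∧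
          (L.length : ℝ) ≤ C' * (w.length : ℝ) ^ 2 + C' * w.length + C' := by
  set π := QuotientGroup.mk' (Subgroup.normalClosure (R : Set (FreeGroup S)))
  have hker : π.ker = Subgroup.normalClosure (R : Set (FreeGroup S)) := QuotientGroup.ker_mk' _
  have hT : HasQuadraticTriangles R W C := by
    intro g₁ g₂ g₃ w₁ w₂ w₃ hw₁ hw₂ hw₃ h
    obtain ⟨L, hL, hlen⟩ := h2 g₁ g₂ g₃ w₁ w₂ w₃ hw₁ hw₂ hw₃ <| by
      rw [← hker, MonoidHom.mem_ker, ← mul_mk, ← mul_mk, _root_.map_mul, _root_.map_mul,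
        hWrep _ _ hw₁, hWrep _ _ hw₂, hWrep _ _ hw₃, h]
    exact ⟨L, by rwa [← mul_mk, ← mul_mk] at hL, by exact_mod_cast hlen⟩
  obtain ⟨m, hm⟩ := hT.exists_areaLE_quadratic hC.le hker hWrep fun p => h1 _ p rfl
  refine ⟨25 * C ^ 3 + m, by positivity, fun w hw => ?_⟩
  obtain ⟨L, hL, hlen⟩ := hm w hw
  refine ⟨L, hL, hlen.trans ?_⟩
  have hC3 : 0 ≤ C ^ 3 := by positivity
  have hN : (0 : ℝ) ≤ w.length := w.length.cast_nonneg
  have hm0 : (0 : ℝ) ≤ m := m.cast_nonneg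
  nlinarith [mul_nonneg hC3 hN, mul_nonneg hm0 (sq_nonneg (w.length : ℝ))]

/-- let `G = ⟨S ∣ R⟩` be a finitely presented group and for each
`g ∈ G` let `W g` be a nonempty set of words representing `g`. If for some `C > 0`
(i) every `g` has a representative in `W g` of length at most `C·‖g‖`, and (ii) every
null-homotopic concatenation `w₁w₂w₃` with `wᵢ ∈ W gᵢ` has area at most
`C(|w₁|+|w₂|+|w₃|)²`, then the Dehn function of `G` is bounded above by
`C'·N² + C'·N + C'` for some `C' > 0`. -/
theorem dehn_quadratic_from_triangles (S : Type) [Fintype S] (R : Finset (FreeGroup S))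
    (W : (FreeGroup S ⧸ Subgroup.normalClosure (R : Set (FreeGroup S))) → Set (List (S × Bool)))
    (hWrep : ∀ g, ∀ w ∈ W g,
      QuotientGroup.mk' (Subgroup.normalClosure (R : Set (FreeGroup S))) (FreeGroup.mk w) = g)
    (hWne : ∀ g, (W g).Nonempty)
    (C : ℝ) (hC : 0 < C)
    (h1 : ∀ g (L : List (S × Bool)),
      QuotientGroup.mk' (Subgroup.normalClosure (R : Set (FreeGroup S))) (FreeGroup.mk L) = g →
      ∃ w ∈ W g, (w.length : ℝ) ≤ C * L.length)
    (h2 : ∀ g₁ g₂ g₃ (w₁ w₂ w₃ : List (S × Bool)), w₁ ∈ W g₁ → w₂ ∈ W g₂ → w₃ ∈ W g₃ →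
      FreeGroup.mk (w₁ ++ w₂ ++ w₃) ∈ Subgroup.normalClosure (R : Set (FreeGroup S)) →
      ∃ L : List (FreeGroup S × FreeGroup S),
        IsFilling R L (FreeGroup.mk (w₁ ++ w₂ ++ w₃)) ∧
        (L.length : ℝ) ≤ C * ((w₁.length + w₂.length + w₃.length : ℕ) : ℝ) ^ 2) :
    ∃ C' : ℝ, 0 < C' ∧
      ∀ w : List (S × Bool),
        FreeGroup.mk w ∈ Subgroup.normalClosure (R : Set (FreeGroup S)) →
        ∃ L : List (FreeGroup S × FreeGroup S),
          IsFilling R L (FreeGroup.mk w) ∧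
          (L.length : ℝ) ≤ C' * (w.length : ℝ) ^ 2 + C' * w.length + C' :=
  dehn_quadratic_from_triangles_general S R W hWrep C hC h1 h2
end

section
/- For n ≥ 2 and 1 ≤ i ≤ n−1, the glide γ_i ∈ F_n satisfies: γ_i^{-1} maps the interval [(i−1)/n, i/n] onto [(i−1)/n, (i−1)/n + 1/n^2], and γ_i maps [i/n, (i+1)/n] onto [(i+1)/n − 1/n^2, (i+1)/n]; consequently γ_i^{-1} F_n[i] γ_i ⊆ F_n[i] and γ_i F_n[i+1] γ_i^{-1} ⊆ F_n[i+1]. -/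
/-- `r` is an `n`-adic rational. -/
def IsNAdic (n : ℕ) (r : ℝ) : Prop := ∃ (a : ℤ) (b : ℕ), r = a / n ^ b

/-- Membership in the Higman–Thompson group `F_n`. -/
def IsThompsonFn (n : ℕ) (f : ℝ → ℝ) : Prop :=
  StrictMono f ∧ Continuous f ∧ (∀ x : ℝ, x ≤ 0 ∨ 1 ≤ x → f x = x) ∧
    ∃ B : Finset ℝ, (∀ b ∈ B, IsNAdic n b) ∧
      ∀ x : ℝ, x ∉ B → ∃ m : ℤ, ∀ᶠ y in nhds x, f y = f x + (n : ℝ) ^ m * (y - x)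

/-- Membership in `F_n[a,b]`. -/
def IsThompsonFnInterval (n : ℕ) (a b : ℝ) (f : ℝ → ℝ) : Prop :=
  IsThompsonFn n f ∧ ∀ x : ℝ, x ∉ Set.Ioo a b → f x = x

/-- The glide `γ_i = γ_{i,i+1} ∈ F_n`: the PL map sending the subdivision of `[0,1]`
into `n` intervals with the `i`-th subdivided into `n` equal parts affinely onto the
analogous subdivision with the `(i+1)`-st interval subdivided. -/
noncomputable def glide (n i : ℕ) : ℝ → ℝ := fun x =>
  if x ≤ ((i : ℝ) - 1) / n then x
  else if x ≤ ((i : ℝ) - 1) / n + 1 / (n : ℝ) ^ 2 then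
    n * (x - ((i : ℝ) - 1) / n) + ((i : ℝ) - 1) / n
  else if x ≤ (i : ℝ) / n then x + 1 / (n : ℝ) - 1 / (n : ℝ) ^ 2
  else if x ≤ ((i : ℝ) + 1) / n then
    (x - (i : ℝ) / n) / n + ((i : ℝ) + 1) / n - 1 / (n : ℝ) ^ 2
  else x

/-- The inverse `γ_i⁻¹ = γ_{i+1,i}` of the glide `γ_i`. -/
noncomputable def glideInv (n i : ℕ) : ℝ → ℝ := fun x =>
  if x ≤ ((i : ℝ) - 1) / n then x
  else if x ≤ (i : ℝ) / n then (x - ((i : ℝ) - 1) / n) / n + ((i : ℝ) - 1) / n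
  else if x ≤ ((i : ℝ) + 1) / n - 1 / (n : ℝ) ^ 2 then x - 1 / (n : ℝ) + 1 / (n : ℝ) ^ 2
  else if x ≤ ((i : ℝ) + 1) / n then
    n * (x - (((i : ℝ) + 1) / n - 1 / (n : ℝ) ^ 2)) + (i : ℝ) / n
  else x

namespace GlideAux

noncomputable def bp0 (n i : ℕ) : ℝ := ((i : ℝ) - 1) / n
noncomputable def bp1 (n i : ℕ) : ℝ := ((i : ℝ) - 1) / n + 1 / (n : ℝ) ^ 2
noncomputable def bp2 (n i : ℕ) : ℝ := (i : ℝ) / n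
noncomputable def bp3 (n i : ℕ) : ℝ := ((i : ℝ) + 1) / n
noncomputable def bp2' (n i : ℕ) : ℝ := ((i : ℝ) + 1) / n - 1 / (n : ℝ) ^ 2

variable {n i : ℕ}

lemma hN0 (hN : (2:ℝ) ≤ n) : (0:ℝ) < n := by linarith
lemma hNne (hN : (2:ℝ) ≤ n) : (n:ℝ) ≠ 0 := ne_of_gt (hN0 hN)

lemma b01 (hN : (2:ℝ) ≤ n) : bp0 n i < bp1 n i := by
  have h := hN0 hN
  have : (0:ℝ) < 1 / (n:ℝ)^2 := by positivity
  unfold bp0 bp1; linarith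

lemma b12 (hN : (2:ℝ) ≤ n) : bp1 n i < bp2 n i := by
  have h := hN0 hN
  have key : bp2 n i - bp1 n i = ((n:ℝ) - 1) / (n:ℝ)^2 := by
    unfold bp1 bp2; field_simp; ring
  have : (0:ℝ) < ((n:ℝ) - 1) / (n:ℝ)^2 := div_pos (by linarith) (by positivity)
  linarith

lemma b23 (hN : (2:ℝ) ≤ n) : bp2 n i < bp3 n i := by
  have h := hN0 hN
  have key : bp3 n i - bp2 n i = 1 / (n:ℝ) := by unfold bp2 bp3; field_simp; ring
  have : (0:ℝ) < 1 / (n:ℝ) := by positivity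
  linarith

lemma b02 (hN : (2:ℝ) ≤ n) : bp0 n i < bp2 n i := (b01 hN).trans (b12 hN)

lemma c12 (hN : (2:ℝ) ≤ n) : bp2 n i < bp2' n i := by
  have h := hN0 hN
  have key : bp2' n i - bp2 n i = ((n:ℝ) - 1) / (n:ℝ)^2 := by
    unfold bp2 bp2'; field_simp; ring
  have : (0:ℝ) < ((n:ℝ) - 1) / (n:ℝ)^2 := div_pos (by linarith) (by positivity)
  linarith

lemma c23 (hN : (2:ℝ) ≤ n) : bp2' n i < bp3 n i := by
  have h := hN0 hN
  have : (0:ℝ) < 1 / (n:ℝ)^2 := by positivity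
  unfold bp2' bp3; linarith

lemma b0nn (hN : (2:ℝ) ≤ n) (hI1 : (1:ℝ) ≤ i) : 0 ≤ bp0 n i :=
  div_nonneg (by linarith) (hN0 hN).le

lemma b2lt1 (hN : (2:ℝ) ≤ n) (hI2 : (i:ℝ) + 1 ≤ n) : bp2 n i < 1 := by
  have h := hN0 hN
  rw [bp2, div_lt_one h]; linarith

lemma b3le1 (hN : (2:ℝ) ≤ n) (hI2 : (i:ℝ) + 1 ≤ n) : bp3 n i ≤ 1 := by
  have h := hN0 hN
  rw [bp3, div_le_one h]; linarith

/-! ### Evaluation lemmas -/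

section Eval
variable (hN : (2:ℝ) ≤ n) {x : ℝ}
include hN

omit hN in
lemma g_eval0 {x : ℝ} (h : x ≤ bp0 n i) : glide n i x = x := if_pos h

lemma g_eval1 (h0 : bp0 n i < x) (h1 : x ≤ bp1 n i) :
    glide n i x = n * (x - bp0 n i) + bp0 n i := by
  have h01 := b01 (n:=n) (i:=i) hN; have h12 := b12 (n:=n) (i:=i) hN
  have h23 := b23 (n:=n) (i:=i) hN
  simp only [bp0, bp1, bp2, bp3] at *
  rw [glide]; split_ifs <;> first | rfl | linarith

lemma g_eval2 (h1 : bp1 n i < x) (h2 : x ≤ bp2 n i) :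
    glide n i x = x + 1 / (n:ℝ) - 1 / (n:ℝ)^2 := by
  have h01 := b01 (n:=n) (i:=i) hN; have h12 := b12 (n:=n) (i:=i) hN
  have h23 := b23 (n:=n) (i:=i) hN
  simp only [bp0, bp1, bp2, bp3] at *
  rw [glide]; split_ifs <;> first | rfl | linarith

lemma g_eval3 (h2 : bp2 n i < x) (h3 : x ≤ bp3 n i) :
    glide n i x = (x - bp2 n i) / n + bp3 n i - 1 / (n:ℝ)^2 := by
  have h01 := b01 (n:=n) (i:=i) hN; have h12 := b12 (n:=n) (i:=i) hN
  have h23 := b23 (n:=n) (i:=i) hN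
  simp only [bp0, bp1, bp2, bp3] at *
  rw [glide]; split_ifs <;> first | rfl | linarith

lemma g_eval4 (h3 : bp3 n i < x) : glide n i x = x := by
  have h01 := b01 (n:=n) (i:=i) hN; have h12 := b12 (n:=n) (i:=i) hN
  have h23 := b23 (n:=n) (i:=i) hN
  simp only [bp0, bp1, bp2, bp3] at *
  rw [glide]; split_ifs <;> first | rfl | linarith

omit hN in
lemma gi_eval0 {x : ℝ} (h : x ≤ bp0 n i) : glideInv n i x = x := if_pos h

lemma gi_eval1 (h0 : bp0 n i < x) (h1 : x ≤ bp2 n i) :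
    glideInv n i x = (x - bp0 n i) / n + bp0 n i := by
  have h02 := b02 (n:=n) (i:=i) hN; have hc12 := c12 (n:=n) (i:=i) hN
  have hc23 := c23 (n:=n) (i:=i) hN
  simp only [bp0, bp2, bp2', bp3] at *
  rw [glideInv]; split_ifs <;> first | rfl | linarith

lemma gi_eval2 (h1 : bp2 n i < x) (h2 : x ≤ bp2' n i) :
    glideInv n i x = x - 1 / (n:ℝ) + 1 / (n:ℝ)^2 := by
  have h02 := b02 (n:=n) (i:=i) hN; have hc12 := c12 (n:=n) (i:=i) hN
  have hc23 := c23 (n:=n) (i:=i) hN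
  simp only [bp0, bp2, bp2', bp3] at *
  rw [glideInv]; split_ifs <;> first | rfl | linarith

lemma gi_eval3 (h2 : bp2' n i < x) (h3 : x ≤ bp3 n i) :
    glideInv n i x = n * (x - bp2' n i) + bp2 n i := by
  have h02 := b02 (n:=n) (i:=i) hN; have hc12 := c12 (n:=n) (i:=i) hN
  have hc23 := c23 (n:=n) (i:=i) hN
  simp only [bp0, bp2, bp2', bp3] at *
  rw [glideInv]; split_ifs <;> first | rfl | linarith

lemma gi_eval4 (h3 : bp3 n i < x) : glideInv n i x = x := by
  have h02 := b02 (n:=n) (i:=i) hN; have hc12 := c12 (n:=n) (i:=i) hN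
  have hc23 := c23 (n:=n) (i:=i) hN
  simp only [bp0, bp2, bp2', bp3] at *
  rw [glideInv]; split_ifs <;> first | rfl | linarith

end Eval

end GlideAux
namespace GlideAux

variable {n i : ℕ}

section Vals
variable (hN : (2:ℝ) ≤ n)
include hN

omit hN in
lemma glide_bp0 : glide n i (bp0 n i) = bp0 n i := g_eval0 le_rfl

lemma glide_bp1 : glide n i (bp1 n i) = bp2 n i := by
  rw [g_eval1 hN (b01 hN) le_rfl]
  have := hNne hN
  simp only [bp0, bp1, bp2]; field_simp <;> ring

lemma glide_bp2 : glide n i (bp2 n i) = bp2' n i := by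
  rw [g_eval2 hN (b12 hN) le_rfl]
  have := hNne hN
  simp only [bp2, bp2', bp3]; field_simp <;> ring

lemma glide_bp3 : glide n i (bp3 n i) = bp3 n i := by
  rw [g_eval3 hN (b23 hN) le_rfl]
  have := hNne hN
  simp only [bp2, bp3]; field_simp <;> ring

omit hN in
lemma glideInv_bp0 : glideInv n i (bp0 n i) = bp0 n i := gi_eval0 le_rfl

lemma glideInv_bp2 : glideInv n i (bp2 n i) = bp1 n i := by
  rw [gi_eval1 hN (b02 hN) le_rfl]
  have := hNne hN
  simp only [bp0, bp1, bp2]; field_simp <;> ring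

lemma glideInv_bp2' : glideInv n i (bp2' n i) = bp2 n i := by
  rw [gi_eval2 hN (c12 hN) le_rfl]
  have := hNne hN
  simp only [bp2, bp2', bp3]; field_simp <;> ring

lemma glideInv_bp3 : glideInv n i (bp3 n i) = bp3 n i := by
  rw [gi_eval3 hN (c23 hN) le_rfl]
  have := hNne hN
  simp only [bp2, bp2', bp3]; field_simp <;> ring

/-! ### Compositions -/

lemma glideInv_glide : ∀ x : ℝ, glideInv n i (glide n i x) = x := by
  intro x
  have hne := hNne hN
  have hpos := hN0 hN
  have h01 := b01 (n:=n) (i:=i) hN; have h12 := b12 (n:=n) (i:=i) hN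
  have h23 := b23 (n:=n) (i:=i) hN; have hc12 := c12 (n:=n) (i:=i) hN
  have hc23 := c23 (n:=n) (i:=i) hN
  rcases le_or_gt x (bp0 n i) with h | h
  · rw [g_eval0 h, gi_eval0 h]
  rcases le_or_gt x (bp1 n i) with h1 | h1
  · rw [g_eval1 hN h h1]
    have e0 : bp0 n i < n * (x - bp0 n i) + bp0 n i := by nlinarith
    have e1 : n * (x - bp0 n i) + bp0 n i ≤ bp2 n i := by
      have : bp2 n i = n * (bp1 n i - bp0 n i) + bp0 n i := by
        simp only [bp0, bp1, bp2]; field_simp <;> ring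
      nlinarith
    rw [gi_eval1 hN e0 e1]; field_simp; ring
  rcases le_or_gt x (bp2 n i) with h2 | h2
  · rw [g_eval2 hN h1 h2]
    have e0 : bp2 n i < x + 1 / (n:ℝ) - 1 / (n:ℝ)^2 := by
      have : bp2 n i = bp1 n i + 1 / (n:ℝ) - 1 / (n:ℝ)^2 := by
        simp only [bp1, bp2]; field_simp <;> ring
      linarith
    have e1 : x + 1 / (n:ℝ) - 1 / (n:ℝ)^2 ≤ bp2' n i := by
      have : bp2' n i = bp2 n i + 1 / (n:ℝ) - 1 / (n:ℝ)^2 := by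
        simp only [bp2, bp2']; field_simp <;> ring
      linarith
    rw [gi_eval2 hN e0 e1]; ring
  rcases le_or_gt x (bp3 n i) with h3 | h3
  · rw [g_eval3 hN h2 h3]
    have key : ∀ y : ℝ, (y - bp2 n i) / n + bp3 n i - 1 / (n:ℝ)^2
        = (y - bp2 n i) / n + bp2' n i := by
      intro y; simp only [bp2', bp3]; ring
    have e0 : bp2' n i < (x - bp2 n i) / n + bp3 n i - 1 / (n:ℝ)^2 := by
      rw [key]
      have : 0 < (x - bp2 n i) / n := div_pos (by linarith) hpos
      linarith
    have e1 : (x - bp2 n i) / n + bp3 n i - 1 / (n:ℝ)^2 ≤ bp3 n i := by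
      have h1n : (x - bp2 n i) / n ≤ (bp3 n i - bp2 n i) / n :=
        (div_le_div_iff_of_pos_right hpos).mpr (by linarith)
      have h2n : (bp3 n i - bp2 n i) / (n:ℝ) = 1 / (n:ℝ)^2 := by
        simp only [bp2, bp3]; field_simp <;> ring
      linarith
    rw [gi_eval3 hN e0 e1, key]
    simp only [bp0, bp1, bp2, bp2', bp3]; field_simp <;> ring
  · rw [g_eval4 hN h3, gi_eval4 hN h3]

lemma glide_glideInv : ∀ x : ℝ, glide n i (glideInv n i x) = x := by
  intro x
  have hne := hNne hN
  have hpos := hN0 hN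
  have h01 := b01 (n:=n) (i:=i) hN; have h12 := b12 (n:=n) (i:=i) hN
  have h23 := b23 (n:=n) (i:=i) hN; have hc12 := c12 (n:=n) (i:=i) hN
  have hc23 := c23 (n:=n) (i:=i) hN
  rcases le_or_gt x (bp0 n i) with h | h
  · rw [gi_eval0 h, g_eval0 h]
  rcases le_or_gt x (bp2 n i) with h1 | h1
  · rw [gi_eval1 hN h h1]
    have e0 : bp0 n i < (x - bp0 n i) / n + bp0 n i := by
      have : 0 < (x - bp0 n i) / n := div_pos (by linarith) hpos
      linarith
    have e1 : (x - bp0 n i) / n + bp0 n i ≤ bp1 n i := by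
      have key : bp1 n i = (bp2 n i - bp0 n i) / n + bp0 n i := by
        simp only [bp0, bp1, bp2]; field_simp <;> ring
      have : (x - bp0 n i) / n ≤ (bp2 n i - bp0 n i) / n :=
        (div_le_div_iff_of_pos_right hpos).mpr (by linarith)
      linarith
    rw [g_eval1 hN e0 e1]; field_simp <;> ring
  rcases le_or_gt x (bp2' n i) with h2 | h2
  · rw [gi_eval2 hN h1 h2]
    have e0 : bp1 n i < x - 1 / (n:ℝ) + 1 / (n:ℝ)^2 := by
      have : bp1 n i = bp2 n i - 1 / (n:ℝ) + 1 / (n:ℝ)^2 := by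
        simp only [bp1, bp2]; field_simp <;> ring
      linarith
    have e1 : x - 1 / (n:ℝ) + 1 / (n:ℝ)^2 ≤ bp2 n i := by
      have : bp2 n i = bp2' n i - 1 / (n:ℝ) + 1 / (n:ℝ)^2 := by
        simp only [bp2, bp2', bp3]; field_simp <;> ring
      linarith
    rw [g_eval2 hN e0 e1]; ring
  rcases le_or_gt x (bp3 n i) with h3 | h3
  · rw [gi_eval3 hN h2 h3]
    have e0 : bp2 n i < n * (x - bp2' n i) + bp2 n i := by nlinarith
    have e1 : n * (x - bp2' n i) + bp2 n i ≤ bp3 n i := by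
      have : bp3 n i = n * (bp3 n i - bp2' n i) + bp2 n i := by
        simp only [bp2, bp2', bp3]; field_simp <;> ring
      nlinarith
    rw [g_eval3 hN e0 e1]
    simp only [bp0, bp1, bp2, bp2', bp3]; field_simp <;> ring
  · rw [gi_eval4 hN h3, g_eval4 hN h3]

end Vals

end GlideAux
namespace GlideAux

variable {n i : ℕ}

section Cont
variable (hN : (2:ℝ) ≤ n)
include hN

lemma glide_cont : Continuous (glide n i) := by
  have hne := hNne hN
  have h01 := b01 (n:=n) (i:=i) hN; have h12 := b12 (n:=n) (i:=i) hN
  have h23 := b23 (n:=n) (i:=i) hN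
  simp only [bp0, bp1, bp2, bp3] at h01 h12 h23
  have c4 : Continuous (fun x : ℝ => if x ≤ ((i:ℝ)+1)/n then
      (x - (i:ℝ)/n)/n + ((i:ℝ)+1)/n - 1/(n:ℝ)^2 else x) := by
    apply Continuous.if_le (by fun_prop) continuous_id continuous_id continuous_const
    intro x hx; simp only [id_eq] at hx; subst hx; simp only [id_eq]; field_simp; ring
  have c3 : Continuous (fun x : ℝ => if x ≤ (i:ℝ)/n then x + 1/(n:ℝ) - 1/(n:ℝ)^2 else
      if x ≤ ((i:ℝ)+1)/n then (x - (i:ℝ)/n)/n + ((i:ℝ)+1)/n - 1/(n:ℝ)^2 else x) := by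
    apply Continuous.if_le (by fun_prop) c4 continuous_id continuous_const
    intro x hx; simp only [id_eq] at hx; subst hx
    rw [if_pos h23.le]; field_simp; ring
  have c2 : Continuous (fun x : ℝ => if x ≤ ((i:ℝ)-1)/n + 1/(n:ℝ)^2 then
      (n:ℝ) * (x - ((i:ℝ)-1)/n) + ((i:ℝ)-1)/n else
      if x ≤ (i:ℝ)/n then x + 1/(n:ℝ) - 1/(n:ℝ)^2 else
      if x ≤ ((i:ℝ)+1)/n then (x - (i:ℝ)/n)/n + ((i:ℝ)+1)/n - 1/(n:ℝ)^2 else x) := by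
    apply Continuous.if_le (by fun_prop) c3 continuous_id continuous_const
    intro x hx; simp only [id_eq] at hx; subst hx
    rw [if_pos h12.le]; field_simp; ring
  unfold glide
  apply Continuous.if_le continuous_id c2 continuous_id continuous_const
  intro x hx; simp only [id_eq] at hx; subst hx
  rw [if_pos h01.le]; simp only [id_eq]; field_simp; ring

lemma glideInv_cont : Continuous (glideInv n i) := by
  have hne := hNne hN
  have h02 := b02 (n:=n) (i:=i) hN; have hc12 := c12 (n:=n) (i:=i) hN
  have hc23 := c23 (n:=n) (i:=i) hN
  simp only [bp0, bp2, bp2', bp3] at h02 hc12 hc23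
  have c4 : Continuous (fun x : ℝ => if x ≤ ((i:ℝ)+1)/n then
      (n:ℝ) * (x - (((i:ℝ)+1)/n - 1/(n:ℝ)^2)) + (i:ℝ)/n else x) := by
    apply Continuous.if_le (by fun_prop) continuous_id continuous_id continuous_const
    intro x hx; simp only [id_eq] at hx; subst hx; simp only [id_eq]; field_simp; ring
  have c3 : Continuous (fun x : ℝ => if x ≤ ((i:ℝ)+1)/n - 1/(n:ℝ)^2 then
      x - 1/(n:ℝ) + 1/(n:ℝ)^2 else
      if x ≤ ((i:ℝ)+1)/n then (n:ℝ) * (x - (((i:ℝ)+1)/n - 1/(n:ℝ)^2)) + (i:ℝ)/n else x) := by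
    apply Continuous.if_le (by fun_prop) c4 continuous_id continuous_const
    intro x hx; simp only [id_eq] at hx; subst hx
    rw [if_pos hc23.le]; field_simp; ring
  have c2 : Continuous (fun x : ℝ => if x ≤ (i:ℝ)/n then
      (x - ((i:ℝ)-1)/n)/n + ((i:ℝ)-1)/n else
      if x ≤ ((i:ℝ)+1)/n - 1/(n:ℝ)^2 then x - 1/(n:ℝ) + 1/(n:ℝ)^2 else
      if x ≤ ((i:ℝ)+1)/n then (n:ℝ) * (x - (((i:ℝ)+1)/n - 1/(n:ℝ)^2)) + (i:ℝ)/n else x) := by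
    apply Continuous.if_le (by fun_prop) c3 continuous_id continuous_const
    intro x hx; simp only [id_eq] at hx; subst hx
    rw [if_pos hc12.le]; field_simp; ring
  unfold glideInv
  apply Continuous.if_le continuous_id c2 continuous_id continuous_const
  intro x hx; simp only [id_eq] at hx; subst hx
  rw [if_pos h02.le]; simp only [id_eq]; field_simp; ring

variable (hI1 : (1:ℝ) ≤ i) (hI2 : (i:ℝ) + 1 ≤ n)
include hI1 hI2

lemma glide_fix {x : ℝ} (hx : x ≤ 0 ∨ 1 ≤ x) : glide n i x = x := by
  rcases hx with hx | hx
  · exact g_eval0 (hx.trans (b0nn hN hI1))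
  · rcases lt_or_ge (bp3 n i) x with h | h
    · exact g_eval4 hN h
    · have hx3 : x = bp3 n i := le_antisymm h (by linarith [b3le1 (i:=i) hN hI2])
      have h1 : bp3 n i = 1 := by linarith [b3le1 (i:=i) hN hI2]
      rw [hx3, glide_bp3 hN]

lemma glideInv_fix {x : ℝ} (hx : x ≤ 0 ∨ 1 ≤ x) : glideInv n i x = x := by
  rcases hx with hx | hx
  · exact gi_eval0 (hx.trans (b0nn hN hI1))
  · rcases lt_or_ge (bp3 n i) x with h | h
    · exact gi_eval4 hN h
    · have hx3 : x = bp3 n i := le_antisymm h (by linarith [b3le1 (i:=i) hN hI2])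
      rw [hx3, glideInv_bp3 hN]

lemma glide_mono : StrictMono (glide n i) := by
  have hinj : Function.Injective (glide n i) :=
    Function.LeftInverse.injective (glideInv_glide hN)
  rcases (glide_cont hN).strictMono_of_inj hinj with h | h
  · exact h
  · exfalso
    have h0 : glide n i 0 = 0 := glide_fix hN hI1 hI2 (Or.inl le_rfl)
    have h1 : glide n i 1 = 1 := glide_fix hN hI1 hI2 (Or.inr le_rfl)
    have := h (show (0:ℝ) < 1 by norm_num)
    rw [h0, h1] at this; linarith

lemma glideInv_mono : StrictMono (glideInv n i) := by
  have hinj : Function.Injective (glideInv n i) :=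
    Function.LeftInverse.injective (glide_glideInv hN)
  rcases (glideInv_cont hN).strictMono_of_inj hinj with h | h
  · exact h
  · exfalso
    have h0 : glideInv n i 0 = 0 := glideInv_fix hN hI1 hI2 (Or.inl le_rfl)
    have h1 : glideInv n i 1 = 1 := glideInv_fix hN hI1 hI2 (Or.inr le_rfl)
    have := h (show (0:ℝ) < 1 by norm_num)
    rw [h0, h1] at this; linarith

end Cont

lemma image_Icc_eq {f : ℝ → ℝ} (hf : StrictMono f) (hc : Continuous f) {a b : ℝ}
    (hab : a ≤ b) : f '' Set.Icc a b = Set.Icc (f a) (f b) := by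
  apply Set.Subset.antisymm
  · rintro _ ⟨x, hx, rfl⟩
    exact ⟨hf.monotone hx.1, hf.monotone hx.2⟩
  · exact intermediate_value_Icc hab hc.continuousOn

end GlideAux
namespace GlideAux

variable {n i : ℕ}

/-! ### n-adic rationals -/

section Adic
variable (hN : (2:ℝ) ≤ n)
include hN

lemma nadd {r s : ℝ} (hr : IsNAdic n r) (hs : IsNAdic n s) : IsNAdic n (r + s) := by
  obtain ⟨a, b, rfl⟩ := hr
  obtain ⟨c, d, rfl⟩ := hs
  refine ⟨a * n ^ d + c * n ^ b, b + d, ?_⟩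
  have hne := hNne hN
  have h1 : ((n:ℝ))^b ≠ 0 := pow_ne_zero _ hne
  have h2 : ((n:ℝ))^d ≠ 0 := pow_ne_zero _ hne
  push_cast
  rw [div_add_div _ _ h1 h2, pow_add, div_eq_div_iff (by positivity) (by positivity)]
  ring

lemma nneg {r : ℝ} (hr : IsNAdic n r) : IsNAdic n (-r) := by
  obtain ⟨a, b, rfl⟩ := hr
  exact ⟨-a, b, by push_cast; ring⟩

lemma nsub {r s : ℝ} (hr : IsNAdic n r) (hs : IsNAdic n s) : IsNAdic n (r - s) := by
  rw [sub_eq_add_neg]; exact nadd hN hr (nneg hN hs)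

omit hN in
lemma ndiv {r : ℝ} (hr : IsNAdic n r) : IsNAdic n (r / n) := by
  obtain ⟨a, b, rfl⟩ := hr
  exact ⟨a, b + 1, by push_cast; rw [pow_succ]; ring⟩

omit hN in
lemma nmul {r : ℝ} (hr : IsNAdic n r) : IsNAdic n (r * n) := by
  obtain ⟨a, b, rfl⟩ := hr
  exact ⟨a * n, b, by push_cast; ring⟩

lemma adic_bp0 : IsNAdic n (bp0 n i) := ⟨(i:ℤ) - 1, 1, by push_cast [bp0]; ring⟩

lemma adic_bp1 : IsNAdic n (bp1 n i) := by
  refine ⟨((i:ℤ) - 1) * n + 1, 2, ?_⟩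
  have hne := hNne hN
  push_cast [bp1]
  field_simp

lemma adic_bp2 : IsNAdic n (bp2 n i) := ⟨(i:ℤ), 1, by push_cast [bp2]; ring⟩

lemma adic_bp3 : IsNAdic n (bp3 n i) := ⟨(i:ℤ) + 1, 1, by push_cast [bp3]; ring⟩

lemma adic_bp2' : IsNAdic n (bp2' n i) := by
  refine ⟨((i:ℤ) + 1) * n - 1, 2, ?_⟩
  have hne := hNne hN
  push_cast [bp2']
  field_simp

lemma adic_invn : IsNAdic n (1 / (n:ℝ)) := ⟨1, 1, by push_cast; ring⟩

lemma adic_invn2 : IsNAdic n (1 / (n:ℝ)^2) := ⟨1, 2, by push_cast; ring⟩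

lemma adic_glide {x : ℝ} (hx : IsNAdic n x) : IsNAdic n (glide n i x) := by
  rcases le_or_gt x (bp0 n i) with h | h
  · rwa [g_eval0 h]
  rcases le_or_gt x (bp1 n i) with h1 | h1
  · rw [g_eval1 hN h h1]
    have : (n:ℝ) * (x - bp0 n i) + bp0 n i = (x - bp0 n i) * n + bp0 n i := by ring
    rw [this]
    exact nadd hN (nmul (nsub hN hx (adic_bp0 hN))) (adic_bp0 hN)
  rcases le_or_gt x (bp2 n i) with h2 | h2
  · rw [g_eval2 hN h1 h2]
    exact nsub hN (nadd hN hx (adic_invn hN)) (adic_invn2 hN)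
  rcases le_or_gt x (bp3 n i) with h3 | h3
  · rw [g_eval3 hN h2 h3]
    exact nsub hN (nadd hN (ndiv (nsub hN hx (adic_bp2 hN))) (adic_bp3 hN)) (adic_invn2 hN)
  · rwa [g_eval4 hN h3]

lemma adic_glideInv {x : ℝ} (hx : IsNAdic n x) : IsNAdic n (glideInv n i x) := by
  rcases le_or_gt x (bp0 n i) with h | h
  · rwa [gi_eval0 h]
  rcases le_or_gt x (bp2 n i) with h1 | h1
  · rw [gi_eval1 hN h h1]
    exact nadd hN (ndiv (nsub hN hx (adic_bp0 hN))) (adic_bp0 hN)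
  rcases le_or_gt x (bp2' n i) with h2 | h2
  · rw [gi_eval2 hN h1 h2]
    exact nadd hN (nsub hN hx (adic_invn hN)) (adic_invn2 hN)
  rcases le_or_gt x (bp3 n i) with h3 | h3
  · rw [gi_eval3 hN h2 h3]
    have : (n:ℝ) * (x - bp2' n i) + bp2 n i = (x - bp2' n i) * n + bp2 n i := by ring
    rw [this]
    exact nadd hN (nmul (nsub hN hx (adic_bp2' hN))) (adic_bp2 hN)
  · rwa [gi_eval4 hN h3]

end Adic

end GlideAux
namespace GlideAux

variable {n i : ℕ}

section Thompson
variable (hN : (2:ℝ) ≤ n) (hI1 : (1:ℝ) ≤ i) (hI2 : (i:ℝ) + 1 ≤ n)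
include hN hI1 hI2

lemma glide_thompson : IsThompsonFn n (glide n i) := by
  refine ⟨glide_mono hN hI1 hI2, glide_cont hN,
    fun x hx => glide_fix hN hI1 hI2 hx,
    ⟨{bp0 n i, bp1 n i, bp2 n i, bp3 n i}, ?_, ?_⟩⟩
  · intro b hb
    simp only [Finset.mem_insert, Finset.mem_singleton] at hb
    rcases hb with rfl | rfl | rfl | rfl
    exacts [adic_bp0 hN, adic_bp1 hN, adic_bp2 hN, adic_bp3 hN]
  · intro x hx
    simp only [Finset.mem_insert, Finset.mem_singleton, not_or] at hx
    obtain ⟨h0, h1, h2, h3⟩ := hx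
    rcases (Ne.lt_or_gt h0) with hlt | hgt
    · refine ⟨0, ?_⟩
      filter_upwards [Iio_mem_nhds hlt] with y hy
      rw [g_eval0 (le_of_lt hy), g_eval0 hlt.le, zpow_zero]; ring
    rcases (Ne.lt_or_gt h1) with hlt1 | hgt1
    · refine ⟨1, ?_⟩
      filter_upwards [Ioo_mem_nhds hgt hlt1] with y hy
      rw [g_eval1 hN hy.1 hy.2.le, g_eval1 hN hgt hlt1.le, zpow_one]; ring
    rcases (Ne.lt_or_gt h2) with hlt2 | hgt2
    · refine ⟨0, ?_⟩
      filter_upwards [Ioo_mem_nhds hgt1 hlt2] with y hy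
      rw [g_eval2 hN hy.1 hy.2.le, g_eval2 hN hgt1 hlt2.le, zpow_zero]; ring
    rcases (Ne.lt_or_gt h3) with hlt3 | hgt3
    · refine ⟨-1, ?_⟩
      filter_upwards [Ioo_mem_nhds hgt2 hlt3] with y hy
      rw [g_eval3 hN hy.1 hy.2.le, g_eval3 hN hgt2 hlt3.le, zpow_neg_one]; ring
    · refine ⟨0, ?_⟩
      filter_upwards [Ioi_mem_nhds hgt3] with y hy
      rw [g_eval4 hN hy, g_eval4 hN hgt3, zpow_zero]; ring

end Thompson

end GlideAux
namespace GlideAux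

variable {n i : ℕ}

section Conj
variable (hN : (2:ℝ) ≤ n) (hI1 : (1:ℝ) ≤ i) (hI2 : (i:ℝ) + 1 ≤ n)
include hN hI1 hI2

lemma conj1 (f : ℝ → ℝ) (hf : IsThompsonFnInterval n (bp0 n i) (bp2 n i) f) :
    IsThompsonFnInterval n (bp0 n i) (bp2 n i) (glideInv n i ∘ f ∘ glide n i) := by
  obtain ⟨⟨hmono, hcont, hfix, B, hBadic, hBslope⟩, hsupp⟩ := hf
  have hne := hNne hN
  have hli : ∀ x, glideInv n i (glide n i x) = x := glideInv_glide hN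
  have hgm := glide_mono hN hI1 hI2
  have hgc := glide_cont (i := i) hN
  have hf0 : f (bp0 n i) = bp0 n i := hsupp _ (fun h => absurd h.1 (lt_irrefl _))
  have hf2 : f (bp2 n i) = bp2 n i := hsupp _ (fun h => absurd h.2 (lt_irrefl _))
  have hmaps : ∀ z ∈ Set.Ioo (bp0 n i) (bp2 n i), f z ∈ Set.Ioo (bp0 n i) (bp2 n i) :=
    fun z hz => ⟨hf0 ▸ hmono hz.1, hf2 ▸ hmono hz.2⟩
  have hsupp' : ∀ x ∉ Set.Ioo (bp0 n i) (bp2 n i), (glideInv n i ∘ f ∘ glide n i) x = x := by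
    intro x hx
    rw [Set.mem_Ioo, not_and_or, not_lt, not_lt] at hx
    simp only [Function.comp_apply]
    rcases hx with hx | hx
    · rw [g_eval0 hx, hsupp x (fun h => absurd h.1 (not_lt.2 hx))]
      exact gi_eval0 hx
    · have hgx : bp2 n i < glide n i x := by
        have h1 : glide n i (bp2 n i) ≤ glide n i x := hgm.monotone hx
        rw [glide_bp2 hN] at h1
        linarith [c12 (n := n) (i := i) hN]
      rw [hsupp _ (fun h => absurd h.2 (not_lt.2 hgx.le))]
      exact hli x
  refine ⟨⟨?_, ?_, ?_, ?_⟩, hsupp'⟩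
  · exact (glideInv_mono hN hI1 hI2).comp (hmono.comp hgm)
  · exact (glideInv_cont hN).comp (hcont.comp hgc)
  · intro x hx
    apply hsupp'
    rw [Set.mem_Ioo, not_and_or, not_lt, not_lt]
    rcases hx with hx | hx
    · exact Or.inl (hx.trans (b0nn hN hI1))
    · exact Or.inr ((b2lt1 hN hI2).le.trans hx)
  · refine ⟨{bp0 n i, bp1 n i, bp2 n i, bp3 n i} ∪ B.image (glideInv n i), ?_, ?_⟩
    · intro b hb
      rw [Finset.mem_union] at hb
      rcases hb with hb | hb
      · simp only [Finset.mem_insert, Finset.mem_singleton] at hb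
        rcases hb with rfl | rfl | rfl | rfl
        exacts [adic_bp0 hN, adic_bp1 hN, adic_bp2 hN, adic_bp3 hN]
      · rw [Finset.mem_image] at hb
        obtain ⟨c, hc, rfl⟩ := hb
        exact adic_glideInv hN (hBadic c hc)
    · intro x hx
      rw [Finset.mem_union, not_or] at hx
      obtain ⟨hx1, hx2⟩ := hx
      simp only [Finset.mem_insert, Finset.mem_singleton, not_or] at hx1
      obtain ⟨hxb0, hxb1, hxb2, hxb3⟩ := hx1
      have hgB : glide n i x ∉ B := by
        intro hmem
        apply hx2
        rw [Finset.mem_image]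
        exact ⟨glide n i x, hmem, hli x⟩
      by_cases hin : glide n i x ∈ Set.Ioo (bp0 n i) (bp2 n i)
      · have hxi : bp0 n i < x := by
          have h1 := hin.1
          rw [← glide_bp0 (n := n) (i := i)] at h1
          exact hgm.lt_iff_lt.mp h1
        have hxi1 : x < bp1 n i := by
          have h1 := hin.2
          rw [← glide_bp1 (i := i) hN] at h1
          exact hgm.lt_iff_lt.mp h1
        obtain ⟨m, hm⟩ := hBslope _ hgB
        have hfx : f (glide n i x) ∈ Set.Ioo (bp0 n i) (bp2 n i) := hmaps _ hin
        refine ⟨m, ?_⟩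
        have ev1 : ∀ᶠ y in nhds x,
            f (glide n i y) = f (glide n i x) + (n:ℝ)^m * (glide n i y - glide n i x) :=
          (hgc.tendsto x).eventually hm
        have ev2 : (f ∘ glide n i) ⁻¹' (Set.Ioo (bp0 n i) (bp2 n i)) ∈ nhds x :=
          ContinuousAt.preimage_mem_nhds ((hcont.comp hgc).continuousAt)
            (Ioo_mem_nhds hfx.1 hfx.2)
        filter_upwards [ev1, ev2, Ioo_mem_nhds hxi hxi1] with y h1 h2 hy
        have h2' : f (glide n i y) ∈ Set.Ioo (bp0 n i) (bp2 n i) := h2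
        have hgx : glide n i x = n * (x - bp0 n i) + bp0 n i := g_eval1 hN hxi hxi1.le
        have hgy : glide n i y = n * (y - bp0 n i) + bp0 n i := g_eval1 hN hy.1 hy.2.le
        simp only [Function.comp_apply]
        rw [gi_eval1 hN h2'.1 h2'.2.le, gi_eval1 hN hfx.1 hfx.2.le, h1, hgx, hgy]
        field_simp
        ring
      · have hout : glide n i x < bp0 n i ∨ bp2 n i < glide n i x := by
          rw [Set.mem_Ioo, not_and_or, not_lt, not_lt] at hin
          rcases hin with h | h
          · left
            rcases lt_or_eq_of_le h with h' | h'
            · exact h'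
            · exfalso
              apply hxb0
              rw [← hli x, h', glideInv_bp0]
          · right
            rcases lt_or_eq_of_le h with h' | h'
            · exact h'
            · exfalso
              apply hxb1
              rw [← hli x, ← h', glideInv_bp2 hN]
        refine ⟨0, ?_⟩
        rcases hout with h | h
        · have ev : glide n i ⁻¹' (Set.Iio (bp0 n i)) ∈ nhds x :=
            ContinuousAt.preimage_mem_nhds hgc.continuousAt (Iio_mem_nhds h)
          filter_upwards [ev] with y hy
          have hy' : glide n i y < bp0 n i := hy
          have e1 : f (glide n i y) = glide n i y :=
            hsupp _ (fun hmem => absurd hmem.1 (not_lt.2 hy'.le))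
          have e1x : f (glide n i x) = glide n i x :=
            hsupp _ (fun hmem => absurd hmem.1 (not_lt.2 h.le))
          simp only [Function.comp_apply]
          rw [e1, e1x, hli, hli, zpow_zero]
          ring
        · have ev : glide n i ⁻¹' (Set.Ioi (bp2 n i)) ∈ nhds x :=
            ContinuousAt.preimage_mem_nhds hgc.continuousAt (Ioi_mem_nhds h)
          filter_upwards [ev] with y hy
          have hy' : bp2 n i < glide n i y := hy
          have e1 : f (glide n i y) = glide n i y :=
            hsupp _ (fun hmem => absurd hmem.2 (not_lt.2 hy'.le))
          have e1x : f (glide n i x) = glide n i x :=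
            hsupp _ (fun hmem => absurd hmem.2 (not_lt.2 h.le))
          simp only [Function.comp_apply]
          rw [e1, e1x, hli, hli, zpow_zero]
          ring

lemma conj2 (f : ℝ → ℝ) (hf : IsThompsonFnInterval n (bp2 n i) (bp3 n i) f) :
    IsThompsonFnInterval n (bp2 n i) (bp3 n i) (glide n i ∘ f ∘ glideInv n i) := by
  obtain ⟨⟨hmono, hcont, hfix, B, hBadic, hBslope⟩, hsupp⟩ := hf
  have hne := hNne hN
  have hli : ∀ x, glide n i (glideInv n i x) = x := glide_glideInv hN
  have hgm := glideInv_mono hN hI1 hI2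
  have hgc := glideInv_cont (i := i) hN
  have hf2 : f (bp2 n i) = bp2 n i := hsupp _ (fun h => absurd h.1 (lt_irrefl _))
  have hf3 : f (bp3 n i) = bp3 n i := hsupp _ (fun h => absurd h.2 (lt_irrefl _))
  have hmaps : ∀ z ∈ Set.Ioo (bp2 n i) (bp3 n i), f z ∈ Set.Ioo (bp2 n i) (bp3 n i) :=
    fun z hz => ⟨hf2 ▸ hmono hz.1, hf3 ▸ hmono hz.2⟩
  have hsupp' : ∀ x ∉ Set.Ioo (bp2 n i) (bp3 n i), (glide n i ∘ f ∘ glideInv n i) x = x := by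
    intro x hx
    rw [Set.mem_Ioo, not_and_or, not_lt, not_lt] at hx
    simp only [Function.comp_apply]
    rcases hx with hx | hx
    · have hgx : glideInv n i x < bp2 n i := by
        have h1 : glideInv n i x ≤ glideInv n i (bp2 n i) := hgm.monotone hx
        rw [glideInv_bp2 hN] at h1
        linarith [b12 (n := n) (i := i) hN]
      rw [hsupp _ (fun h => absurd h.1 (not_lt.2 hgx.le))]
      exact hli x
    · have hgx : bp3 n i ≤ glideInv n i x := by
        have h1 : glideInv n i (bp3 n i) ≤ glideInv n i x := hgm.monotone hx
        rwa [glideInv_bp3 hN] at h1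
      rw [hsupp _ (fun h => absurd h.2 (not_lt.2 hgx))]
      exact hli x
  refine ⟨⟨?_, ?_, ?_, ?_⟩, hsupp'⟩
  · exact (glide_mono hN hI1 hI2).comp (hmono.comp hgm)
  · exact (glide_cont hN).comp (hcont.comp hgc)
  · intro x hx
    apply hsupp'
    rw [Set.mem_Ioo, not_and_or, not_lt, not_lt]
    rcases hx with hx | hx
    · exact Or.inl (hx.trans ((b0nn hN hI1).trans (b02 hN).le))
    · exact Or.inr ((b3le1 hN hI2).trans hx)
  · refine ⟨{bp0 n i, bp2 n i, bp2' n i, bp3 n i} ∪ B.image (glide n i), ?_, ?_⟩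
    · intro b hb
      rw [Finset.mem_union] at hb
      rcases hb with hb | hb
      · simp only [Finset.mem_insert, Finset.mem_singleton] at hb
        rcases hb with rfl | rfl | rfl | rfl
        exacts [adic_bp0 hN, adic_bp2 hN, adic_bp2' hN, adic_bp3 hN]
      · rw [Finset.mem_image] at hb
        obtain ⟨c, hc, rfl⟩ := hb
        exact adic_glide hN (hBadic c hc)
    · intro x hx
      rw [Finset.mem_union, not_or] at hx
      obtain ⟨hx1, hx2⟩ := hx
      simp only [Finset.mem_insert, Finset.mem_singleton, not_or] at hx1
      obtain ⟨hxb0, hxb2, hxb2', hxb3⟩ := hx1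
      have hgB : glideInv n i x ∉ B := by
        intro hmem
        apply hx2
        rw [Finset.mem_image]
        exact ⟨glideInv n i x, hmem, hli x⟩
      by_cases hin : glideInv n i x ∈ Set.Ioo (bp2 n i) (bp3 n i)
      · have hxi : bp2' n i < x := by
          have h1 := hin.1
          rw [← glideInv_bp2' (i := i) hN] at h1
          exact hgm.lt_iff_lt.mp h1
        have hxi1 : x < bp3 n i := by
          have h1 := hin.2
          rw [← glideInv_bp3 (i := i) hN] at h1
          exact hgm.lt_iff_lt.mp h1
        obtain ⟨m, hm⟩ := hBslope _ hgB
        have hfx : f (glideInv n i x) ∈ Set.Ioo (bp2 n i) (bp3 n i) := hmaps _ hin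
        refine ⟨m, ?_⟩
        have ev1 : ∀ᶠ y in nhds x,
            f (glideInv n i y) = f (glideInv n i x)
              + (n:ℝ)^m * (glideInv n i y - glideInv n i x) :=
          (hgc.tendsto x).eventually hm
        have ev2 : (f ∘ glideInv n i) ⁻¹' (Set.Ioo (bp2 n i) (bp3 n i)) ∈ nhds x :=
          ContinuousAt.preimage_mem_nhds ((hcont.comp hgc).continuousAt)
            (Ioo_mem_nhds hfx.1 hfx.2)
        filter_upwards [ev1, ev2, Ioo_mem_nhds hxi hxi1] with y h1 h2 hy
        have h2' : f (glideInv n i y) ∈ Set.Ioo (bp2 n i) (bp3 n i) := h2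
        have hgx : glideInv n i x = n * (x - bp2' n i) + bp2 n i := gi_eval3 hN hxi hxi1.le
        have hgy : glideInv n i y = n * (y - bp2' n i) + bp2 n i := gi_eval3 hN hy.1 hy.2.le
        simp only [Function.comp_apply]
        rw [g_eval3 hN h2'.1 h2'.2.le, g_eval3 hN hfx.1 hfx.2.le, h1, hgx, hgy]
        field_simp
        ring
      · have hout : glideInv n i x < bp2 n i ∨ bp3 n i < glideInv n i x := by
          rw [Set.mem_Ioo, not_and_or, not_lt, not_lt] at hin
          rcases hin with h | h
          · left
            rcases lt_or_eq_of_le h with h' | h'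
            · exact h'
            · exfalso
              apply hxb2'
              rw [← hli x, h', glide_bp2 hN]
          · right
            rcases lt_or_eq_of_le h with h' | h'
            · exact h'
            · exfalso
              apply hxb3
              rw [← hli x, ← h', glide_bp3 hN]
        refine ⟨0, ?_⟩
        rcases hout with h | h
        · have ev : glideInv n i ⁻¹' (Set.Iio (bp2 n i)) ∈ nhds x :=
            ContinuousAt.preimage_mem_nhds hgc.continuousAt (Iio_mem_nhds h)
          filter_upwards [ev] with y hy
          have hy' : glideInv n i y < bp2 n i := hy
          have e1 : f (glideInv n i y) = glideInv n i y :=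
            hsupp _ (fun hmem => absurd hmem.1 (not_lt.2 hy'.le))
          have e1x : f (glideInv n i x) = glideInv n i x :=
            hsupp _ (fun hmem => absurd hmem.1 (not_lt.2 h.le))
          simp only [Function.comp_apply]
          rw [e1, e1x, hli, hli, zpow_zero]
          ring
        · have ev : glideInv n i ⁻¹' (Set.Ioi (bp3 n i)) ∈ nhds x :=
            ContinuousAt.preimage_mem_nhds hgc.continuousAt (Ioi_mem_nhds h)
          filter_upwards [ev] with y hy
          have hy' : bp3 n i < glideInv n i y := hy
          have e1 : f (glideInv n i y) = glideInv n i y :=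
            hsupp _ (fun hmem => absurd hmem.2 (not_lt.2 hy'.le))
          have e1x : f (glideInv n i x) = glideInv n i x :=
            hsupp _ (fun hmem => absurd hmem.2 (not_lt.2 h.le))
          simp only [Function.comp_apply]
          rw [e1, e1x, hli, hli, zpow_zero]
          ring

end Conj

end GlideAux

/-- for `n ≥ 2` and `1 ≤ i ≤ n-1`, the glide `γ_i ∈ F_n` satisfies:
`γ_i⁻¹` maps `[(i-1)/n, i/n]` onto `[(i-1)/n, (i-1)/n + 1/n²]`, `γ_i` maps
`[i/n, (i+1)/n]` onto `[(i+1)/n - 1/n², (i+1)/n]`, and consequently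
`γ_i⁻¹ F_n[i] γ_i ⊆ F_n[i]` and `γ_i F_n[i+1] γ_i⁻¹ ⊆ F_n[i+1]`. -/
theorem glide_properties (n i : ℕ) (hn : 2 ≤ n) (hi1 : 1 ≤ i) (hi2 : i ≤ n - 1) :
    IsThompsonFn n (glide n i) ∧
    (glideInv n i ∘ glide n i = id ∧ glide n i ∘ glideInv n i = id) ∧
    (glideInv n i '' Set.Icc (((i : ℝ) - 1) / n) ((i : ℝ) / n) =
      Set.Icc (((i : ℝ) - 1) / n) (((i : ℝ) - 1) / n + 1 / (n : ℝ) ^ 2)) ∧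
    (glide n i '' Set.Icc ((i : ℝ) / n) (((i : ℝ) + 1) / n) =
      Set.Icc (((i : ℝ) + 1) / n - 1 / (n : ℝ) ^ 2) (((i : ℝ) + 1) / n)) ∧
    (∀ f : ℝ → ℝ, IsThompsonFnInterval n (((i : ℝ) - 1) / n) ((i : ℝ) / n) f →
      IsThompsonFnInterval n (((i : ℝ) - 1) / n) ((i : ℝ) / n)
        (glideInv n i ∘ f ∘ glide n i)) ∧
    (∀ f : ℝ → ℝ, IsThompsonFnInterval n ((i : ℝ) / n) (((i : ℝ) + 1) / n) f →
      IsThompsonFnInterval n ((i : ℝ) / n) (((i : ℝ) + 1) / n)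
        (glide n i ∘ f ∘ glideInv n i)) := by
  have hN : (2:ℝ) ≤ n := by exact_mod_cast hn
  have hI1 : (1:ℝ) ≤ i := by exact_mod_cast hi1
  have hI2 : (i:ℝ) + 1 ≤ n := by
    have h : i + 1 ≤ n := by omega
    exact_mod_cast h
  refine ⟨GlideAux.glide_thompson hN hI1 hI2,
    ⟨funext fun x => GlideAux.glideInv_glide hN x, funext fun x => GlideAux.glide_glideInv hN x⟩,
    ?_, ?_,
    fun f hf => GlideAux.conj1 hN hI1 hI2 f hf,
    fun f hf => GlideAux.conj2 hN hI1 hI2 f hf⟩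
  · have h := GlideAux.image_Icc_eq (GlideAux.glideInv_mono hN hI1 hI2)
      (GlideAux.glideInv_cont hN) (GlideAux.b02 (i := i) hN).le
    rw [GlideAux.glideInv_bp0, GlideAux.glideInv_bp2 hN] at h
    exact h
  · have h := GlideAux.image_Icc_eq (GlideAux.glide_mono hN hI1 hI2)
      (GlideAux.glide_cont hN) (GlideAux.b23 (i := i) hN).le
    rw [GlideAux.glide_bp2 hN, GlideAux.glide_bp3 hN] at h
    exact h
end
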